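/- arXiv:2511.00292 — 3 statements merged into one kernel-verified Lean document; each statement's English description precedes it below -/
import Mathlib

section
/- Let A be a real diagonalizable 3×3 matrix with real eigenvalues λ1 ≤ λ2 ≤ λ3, and suppose J2(A) > 0. Let φ = arccos((3·√3/2)·J3(A)/J2(A)^{3/2}). Then for each k ∈ {1,2,3}, λk = (1/3)·(I1(A) + 2·√(3·J2(A))·cos((φ + 2·π·k)/3)). -/
/-!
Conjugation by `U` leaves `I1`, `J2`, `J3` unchanged, so the deviatoric eigenvalues
`sᵢ = λᵢ - I1 / 3` satisfy `∑ sᵢ = 0`, `∑_{i<j} sᵢ sⱼ = -J2` and `∏ sᵢ = J3`. The discriminant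
`4 J2³ - 27 J3² = ((s₀ - s₁)(s₁ - s₂)(s₂ - s₀))²` is nonnegative, so the argument of `arccos`
lies in `[-1, 1]` and `cos φ = J3 / (2 r³)` with `r = √(J2 / 3)`. By the triple-angle formula
the numbers `2 r cos (φ / 3 + 2πk / 3)` have the same elementary symmetric functions as the `sᵢ`,
and since `φ / 3 ∈ [0, π / 3]` they are increasing in the order `k = 1, 2, 3`. Two sorted triples
with the same elementary symmetric functions coincide, because each is the sorted list of roots of
the same cubic.
-/

noncomputable def dev (A : Matrix (Fin 3) (Fin 3) ℝ) : Matrix (Fin 3) (Fin 3) ℝ :=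
  A - (Matrix.trace A / 3) • (1 : Matrix (Fin 3) (Fin 3) ℝ)

noncomputable def I1 (A : Matrix (Fin 3) (Fin 3) ℝ) : ℝ := Matrix.trace A

noncomputable def J2 (A : Matrix (Fin 3) (Fin 3) ℝ) : ℝ :=
  (1 / 2) * Matrix.trace (dev A * dev A)

noncomputable def J3 (A : Matrix (Fin 3) (Fin 3) ℝ) : ℝ := (dev A).det

open Matrix Real

lemma Matrix.conj_mul_conj {n R : Type*} [Fintype n] [DecidableEq n] [CommRing R]
    {U : Matrix n n R} (hU : IsUnit U) (M N : Matrix n n R) :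
    U * M * U⁻¹ * (U * N * U⁻¹) = U * (M * N) * U⁻¹ := by
  simp only [Matrix.mul_assoc, nonsing_inv_mul_cancel_left _ _ ((isUnit_iff_isUnit_det U).mp hU)]

section Invariants

variable {U : Matrix (Fin 3) (Fin 3) ℝ}

lemma dev_conj (hU : IsUnit U) (A : Matrix (Fin 3) (Fin 3) ℝ) :
    dev (U * A * U⁻¹) = U * dev A * U⁻¹ := by
  rw [dev, dev, trace_conj hU, Matrix.mul_sub, Matrix.sub_mul, Matrix.mul_smul, Matrix.mul_one,
    Matrix.smul_mul, mul_nonsing_inv _ ((isUnit_iff_isUnit_det U).mp hU)]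

lemma I1_conj (hU : IsUnit U) (A : Matrix (Fin 3) (Fin 3) ℝ) : I1 (U * A * U⁻¹) = I1 A :=
  trace_conj hU A

lemma J2_conj (hU : IsUnit U) (A : Matrix (Fin 3) (Fin 3) ℝ) : J2 (U * A * U⁻¹) = J2 A := by
  rw [J2, J2, dev_conj hU, conj_mul_conj hU, trace_conj hU]

lemma J3_conj (hU : IsUnit U) (A : Matrix (Fin 3) (Fin 3) ℝ) : J3 (U * A * U⁻¹) = J3 A := by
  rw [J3, J3, dev_conj hU, det_conj hU]

end Invariants

section Diagonal

variable (l : Fin 3 → ℝ)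

lemma dev_diagonal : dev (diagonal l) = diagonal fun i ↦ l i - (∑ j, l j) / 3 := by
  rw [dev, trace_diagonal, smul_one_eq_diagonal, diagonal_sub]

lemma I1_diagonal : I1 (diagonal l) = ∑ i, l i := trace_diagonal l

lemma J2_diagonal : J2 (diagonal l) = (∑ i, (l i - (∑ j, l j) / 3) ^ 2) / 2 := by
  simp only [J2, dev_diagonal, diagonal_mul_diagonal, trace_diagonal, sq]
  ring

lemma J3_diagonal : J3 (diagonal l) = ∏ i, (l i - (∑ j, l j) / 3) := by
  rw [J3, dev_diagonal, det_diagonal]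

end Diagonal

lemma mem_Icc_of_mul_sub_eq_zero {K : Type*} [Field K] [LinearOrder K] [IsStrictOrderedRing K]
    {z c₀ c₁ c₂ : K} (h₀₁ : c₀ ≤ c₁) (h₁₂ : c₁ ≤ c₂) (h : (z - c₀) * (z - c₁) * (z - c₂) = 0) :
    z ∈ Set.Icc c₀ c₂ := by
  simp only [mul_eq_zero, sub_eq_zero] at h
  obtain (rfl | rfl) | rfl := h <;> constructor <;> linarith

lemma eq_of_sorted_of_vieta {K : Type*} [Field K] [LinearOrder K] [IsStrictOrderedRing K]
    {a₀ a₁ a₂ b₀ b₁ b₂ : K} (ha₀₁ : a₀ ≤ a₁) (ha₁₂ : a₁ ≤ a₂) (hb₀₁ : b₀ ≤ b₁) (hb₁₂ : b₁ ≤ b₂)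
    (he₁ : a₀ + a₁ + a₂ = b₀ + b₁ + b₂)
    (he₂ : a₀ * a₁ + a₀ * a₂ + a₁ * a₂ = b₀ * b₁ + b₀ * b₂ + b₁ * b₂)
    (he₃ : a₀ * a₁ * a₂ = b₀ * b₁ * b₂) :
    a₀ = b₀ ∧ a₁ = b₁ ∧ a₂ = b₂ := by
  have hpoly (z : K) : (z - a₀) * (z - a₁) * (z - a₂) = (z - b₀) * (z - b₁) * (z - b₂) := by
    linear_combination (-z ^ 2) * he₁ + z * he₂ - he₃
  have mem_a (z : K) (hz : (z - a₀) * (z - a₁) * (z - a₂) = 0) :=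
    mem_Icc_of_mul_sub_eq_zero ha₀₁ ha₁₂ hz
  have mem_b (z : K) (hz : (z - a₀) * (z - a₁) * (z - a₂) = 0) :=
    mem_Icc_of_mul_sub_eq_zero hb₀₁ hb₁₂ ((hpoly z).symm.trans hz)
  have h₀ := mem_b a₀ (by ring)
  have h₀' := mem_a b₀ (by rw [hpoly]; ring)
  have h₂ := mem_b a₂ (by ring)
  have h₂' := mem_a b₂ (by rw [hpoly]; ring)
  refine ⟨?_, ?_, ?_⟩ <;> linarith [h₀.1, h₀'.1, h₂.2, h₂'.2]

lemma Real.cos_add_two_pi_div_three (θ : ℝ) :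
    cos (θ + 2 * π / 3) = -cos θ / 2 - √3 / 2 * sin θ := by
  rw [cos_add, show 2 * π / 3 = π - π / 3 by ring, cos_pi_sub, sin_pi_sub, cos_pi_div_three,
    sin_pi_div_three]
  ring

lemma Real.cos_add_four_pi_div_three (θ : ℝ) :
    cos (θ + 4 * π / 3) = -cos θ / 2 + √3 / 2 * sin θ := by
  rw [cos_add, show 4 * π / 3 = π / 3 + π by ring, cos_add_pi, sin_add_pi, cos_pi_div_three,
    sin_pi_div_three]
  ring

theorem eq_two_mul_cos_of_vieta {s₀ s₁ s₂ r θ : ℝ} (h₀₁ : s₀ ≤ s₁) (h₁₂ : s₁ ≤ s₂) (hr : 0 ≤ r)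
    (hθ₀ : 0 ≤ θ) (hθ : θ ≤ π / 3) (he₁ : s₀ + s₁ + s₂ = 0)
    (he₂ : s₀ * s₁ + s₀ * s₂ + s₁ * s₂ = -3 * r ^ 2)
    (he₃ : s₀ * s₁ * s₂ = 2 * r ^ 3 * cos (3 * θ)) :
    s₀ = 2 * r * cos (θ + 2 * π / 3) ∧ s₁ = 2 * r * cos (θ + 4 * π / 3) ∧ s₂ = 2 * r * cos θ := by
  rw [cos_add_two_pi_div_three, cos_add_four_pi_div_three]
  rw [cos_three_mul] at he₃
  have h3 : √3 ^ 2 = 3 := sq_sqrt (by norm_num)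
  have hpyth := cos_sq_add_sin_sq θ
  have hsin : 0 ≤ sin θ := sin_nonneg_of_nonneg_of_le_pi hθ₀ (by linarith [pi_pos])
  have hsin_le : √3 * sin θ ≤ 3 * cos θ := by
    have h := sin_nonneg_of_nonneg_of_le_pi (x := π / 3 - θ) (by linarith) (by linarith [pi_pos])
    rw [sin_sub, sin_pi_div_three, cos_pi_div_three] at h
    have hexp : 3 * cos θ - √3 * sin θ = 2 * √3 * (√3 / 2 * cos θ - 1 / 2 * sin θ) := by
      linear_combination (-cos θ) * h3
    exact sub_nonneg.1 (hexp ▸ mul_nonneg (by positivity) h)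
  apply eq_of_sorted_of_vieta h₀₁ h₁₂
  · nlinarith [mul_nonneg hr (mul_nonneg (sqrt_nonneg 3) hsin)]
  · nlinarith [mul_nonneg hr (sub_nonneg.2 hsin_le)]
  · linear_combination he₁
  · linear_combination he₂ + 3 * r ^ 2 * hpyth + r ^ 2 * sin θ ^ 2 * h3
  · linear_combination he₃ + 2 * r ^ 3 * cos θ * sin θ ^ 2 * h3 + 6 * r ^ 3 * cos θ * hpyth

theorem eq_two_mul_sqrt_mul_cos_arccos {s : Fin 3 → ℝ} (h₀₁ : s 0 ≤ s 1) (h₁₂ : s 1 ≤ s 2)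
    (hsum : ∑ i, s i = 0) {j₂ j₃ : ℝ} (hj₂ : j₂ = (∑ i, s i ^ 2) / 2) (hj₃ : j₃ = ∏ i, s i)
    (hpos : 0 < j₂) (φ : ℝ) (hφ : φ = arccos (3 * √3 / 2 * j₃ / j₂ ^ ((3 : ℝ) / 2))) (k : Fin 3) :
    s k = 2 * √(j₂ / 3) * cos ((φ + 2 * π * ((k : ℕ) + 1)) / 3) := by
  simp only [Fin.sum_univ_three, Fin.prod_univ_three] at hsum hj₂ hj₃
  set r := √(j₂ / 3) with hr_def
  have hr : 0 < r := sqrt_pos.2 (by positivity)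
  have h3 : √3 ^ 2 = 3 := sq_sqrt (by norm_num)
  have hj₂r : j₂ = (√3 * r) ^ 2 := by rw [mul_pow, h3, hr_def, sq_sqrt (by positivity)]; ring
  have hj₂3 : j₂ = 3 * r ^ 2 := by rw [hj₂r, mul_pow, h3]
  have hpow : j₂ ^ ((3 : ℝ) / 2) = √3 ^ 3 * r ^ 3 := by
    rw [hj₂r, ← rpow_natCast, ← rpow_mul (by positivity)]
    norm_num [mul_pow]
  have hdisc : j₃ ^ 2 ≤ (2 * r ^ 3) ^ 2 := by
    have : 4 * j₂ ^ 3 - 27 * j₃ ^ 2 = ((s 0 - s 1) * (s 1 - s 2) * (s 2 - s 0)) ^ 2 := by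
      rw [hj₂, hj₃, show s 2 = -s 0 - s 1 by linarith]; ring
    rw [hj₂r, mul_pow, h3] at this
    nlinarith [sq_nonneg ((s 0 - s 1) * (s 1 - s 2) * (s 2 - s 0))]
  obtain ⟨hlo, hhi⟩ := abs_le_of_sq_le_sq' hdisc (by positivity)
  have hcos : cos φ = j₃ / (2 * r ^ 3) := by
    rw [hφ, hpow, pow_succ, h3, show 3 * √3 / 2 * j₃ / (3 * √3 * r ^ 3) = j₃ / (2 * r ^ 3) by
      field_simp]
    exact cos_arccos (by rw [le_div_iff₀ (by positivity)]; linarith)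
      (by rw [div_le_one (by positivity)]; linarith)
  obtain ⟨h0, h1, h2⟩ := eq_two_mul_cos_of_vieta (θ := φ / 3) h₀₁ h₁₂ hr.le
    (by linarith [hφ ▸ arccos_nonneg _]) (by linarith [hφ ▸ arccos_le_pi _]) hsum
    (by linear_combination (s 0 + s 1 + s 2) / 2 * hsum + hj₂ - hj₂3)
    (by rw [mul_div_cancel₀ _ three_ne_zero, hcos, hj₃]; field_simp)
  match k with
  | 0 => rw [h0]; congr 2; norm_num; ring
  | 1 => rw [h1]; congr 2; norm_num; ring
  | 2 =>
    rw [h2, show (φ + 2 * π * (((2 : Fin 3) : ℕ) + 1)) / 3 = φ / 3 + 2 * π by norm_num; ring,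
      cos_add_two_pi]

/-- For a real diagonalizable `3 × 3` matrix with real eigenvalues `λ1 ≤ λ2 ≤ λ3` and
`J2(A) > 0`, the eigenvalues are given by the trigonometric formula. -/
theorem eigvals_trig_formula (U : Matrix (Fin 3) (Fin 3) ℝ) (hU : IsUnit U)
    (l : Fin 3 → ℝ) (h12 : l 0 ≤ l 1) (h23 : l 1 ≤ l 2)
    (A : Matrix (Fin 3) (Fin 3) ℝ) (hA : A = U * Matrix.diagonal l * U⁻¹)
    (hJ2 : 0 < J2 A)
    (φ : ℝ) (hφ : φ = Real.arccos ((3 * Real.sqrt 3 / 2) * J3 A / (J2 A) ^ ((3 : ℝ) / 2))) :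
    ∀ k : Fin 3,
      l k = (1 / 3) * (I1 A + 2 * Real.sqrt (3 * J2 A) *
        Real.cos ((φ + 2 * Real.pi * ((k : ℕ) + 1)) / 3)) := by
  intro k
  set m := (∑ i, l i) / 3
  have hI1 : I1 A = 3 * m := by rw [hA, I1_conj hU, I1_diagonal]; ring
  have hsum : ∑ i, (l i - m) = 0 := by
    rw [Finset.sum_sub_distrib, Finset.sum_const, Finset.card_univ, Fintype.card_fin]; ring
  have hdev := eq_two_mul_sqrt_mul_cos_arccos (s := fun i ↦ l i - m) (by simpa) (by simpa) hsum
    (by rw [hA, J2_conj hU, J2_diagonal]) (by rw [hA, J3_conj hU, J3_diagonal]) hJ2 φ hφ k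
  have hsqrt : √(3 * J2 A) = 3 * √(J2 A / 3) := by
    rw [show 3 * J2 A = 3 ^ 2 * (J2 A / 3) by ring, sqrt_mul' _ (by positivity),
      sqrt_sq three_pos.le]
  rw [hI1, hsqrt]
  linear_combination hdev
end

section
/- The function Δ : M₃(ℝ) → ℝ given by Δ(A) = 4·J2(A)³ − 27·J3(A)² is Fréchet differentiable at every A, and its derivative applied to a direction H ∈ M₃(ℝ) equals ⟨dev(12·J2(A)²·Aᵀ − 54·J3(A)·cof(dev(A))), H⟩_F. -/
attribute [local instance] Matrix.frobeniusNormedAddCommGroup Matrix.frobeniusNormedSpace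

/-- The discriminant `Δ(A) = 4·J2(A)³ − 27·J3(A)²`. -/
noncomputable def Δ (A : Matrix (Fin 3) (Fin 3) ℝ) : ℝ := 4 * J2 A ^ 3 - 27 * J3 A ^ 2

/-- The cofactor matrix `cof(M) = (adjugate M)ᵀ`. -/
noncomputable def cof (M : Matrix (Fin 3) (Fin 3) ℝ) : Matrix (Fin 3) (Fin 3) ℝ :=
  (Matrix.adjugate M).transpose

/-- The Frobenius inner product `⟨X, Y⟩_F = tr(Xᵀ·Y)`. -/
noncomputable def frobInner (X Y : Matrix (Fin 3) (Fin 3) ℝ) : ℝ :=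
  Matrix.trace (X.transpose * Y)

/-!
`Δ = 4 J2³ − 27 J3²` is a polynomial in `J2` and `J3`, so its derivative is
`12 J2² dJ2 − 54 J3 dJ3`. Since `dev` is a trace-free projection that is self-adjoint for the
pairing `(X, H) ↦ tr (X H)`, one gets `dJ2(A)[H] = tr (dev A · H)` and, from Jacobi's formula
`d det(M)[K] = tr (adj M · K)`, `dJ3(A)[H] = tr (adj (dev A) · dev H) = tr (dev (adj (dev A)) · H)`.
Finally `tr (X H) = ⟨Xᵀ, H⟩_F` and `dev` commutes with transposition.
-/

namespace Matrix

open Finset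

section Calculus

variable {𝕜 : Type*} [NontriviallyNormedField 𝕜] {n : Type*}

noncomputable def entryCLM (i j : n) : Matrix n n 𝕜 →L[𝕜] 𝕜 :=
  (ContinuousLinearMap.proj j).comp
    (ContinuousLinearMap.proj (R := 𝕜) (φ := fun _ : n => n → 𝕜) i)

@[simp]
theorem entryCLM_apply (i j : n) (A : Matrix n n 𝕜) : entryCLM i j A = A i j := rfl

theorem hasFDerivAt_entry (i j : n) (M : Matrix n n 𝕜) :
    HasFDerivAt (fun A : Matrix n n 𝕜 => A i j) (entryCLM i j) M :=
  (entryCLM i j).hasFDerivAt (x := M)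

variable [Fintype n]

noncomputable def traceMulCLM (X : Matrix n n 𝕜) : Matrix n n 𝕜 →L[𝕜] 𝕜 :=
  ∑ i, ∑ j, X i j • entryCLM j i

@[simp]
theorem traceMulCLM_apply (X H : Matrix n n 𝕜) : traceMulCLM X H = trace (X * H) := by
  simp [traceMulCLM, trace, mul_apply]

theorem hasFDerivAt_trace_mul_self (M : Matrix n n 𝕜) :
    HasFDerivAt (fun A : Matrix n n 𝕜 => trace (A * A)) ((2 : 𝕜) • traceMulCLM M) M := by
  -- Spelling out the derivative moves it from the topology of the Frobenius norm, where the
  -- calculus lemmas put it, to the product topology of `Matrix`, so that `simp` can unfold it.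
  have hsum : HasFDerivAt (fun A : Matrix n n 𝕜 => ∑ i, ∑ j, A i j * A j i)
      (∑ i, ∑ j, (M i j • entryCLM j i + M j i • entryCLM i j)) M :=
    .fun_sum fun i _ => .fun_sum fun j _ => (hasFDerivAt_entry i j M).mul (hasFDerivAt_entry j i M)
  refine (hsum.congr_fderiv ?_).congr_of_eventuallyEq (.of_forall fun A => ?_)
  · ext H
    simp only [_root_.sum_apply, _root_.add_apply, _root_.smul_apply, entryCLM_apply, smul_eq_mul,
      traceMulCLM_apply, trace, diag, mul_apply, sum_add_distrib]
    rw [sum_comm (f := fun i j => M j i * H i j), two_mul]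
  · simp [trace, mul_apply]

end Calculus

section Determinant

variable {n : Type*} [Fintype n] [DecidableEq n] {R : Type*} [CommRing R]

theorem det_updateCol_eq_adjugate_mulVec (M : Matrix n n R) (j : n) (c : n → R) :
    (M.updateCol j c).det = (M.adjugate *ᵥ c) j := by
  rw [← cramer_apply, cramer_eq_adjugate_mulVec]

theorem sum_det_updateCol_eq_trace_adjugate_mul (M H : Matrix n n R) :
    ∑ j, (M.updateCol j (Hᵀ j)).det = trace (M.adjugate * H) := by
  simp only [det_updateCol_eq_adjugate_mulVec, mulVec, dotProduct, transpose_apply, trace, diag,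
    mul_apply]

theorem det_updateCol_eq_sum_perm (M : Matrix n n R) (j : n) (c : n → R) :
    (M.updateCol j c).det =
      ∑ σ : Equiv.Perm n, (σ.sign : R) * (c (σ j) * ∏ i ∈ univ.erase j, M (σ i) i) := by
  rw [det_apply']
  refine sum_congr rfl fun σ _ => ?_
  rw [← mul_prod_erase univ _ (mem_univ j), updateCol_self]
  congr 2
  exact prod_congr rfl fun i hi => updateCol_ne (ne_of_mem_erase hi)

theorem hasFDerivAt_det {𝕜 : Type*} [NontriviallyNormedField 𝕜] (M : Matrix n n 𝕜) :
    HasFDerivAt det (traceMulCLM M.adjugate) M := by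
  -- The `i`-th term of the product rule applied to the Leibniz formula is the Leibniz formula
  -- for `det (M.updateCol i (Hᵀ i))`.
  have hLeibniz :
      HasFDerivAt (fun A : Matrix n n 𝕜 => ∑ σ : Equiv.Perm n, (σ.sign : 𝕜) * ∏ i, A (σ i) i)
        (∑ σ : Equiv.Perm n, (σ.sign : 𝕜) • ∑ i, (∏ j ∈ univ.erase i, M (σ j) j) • entryCLM (σ i) i)
        M :=
    .fun_sum fun σ _ => (HasFDerivAt.finsetProd fun i _ => hasFDerivAt_entry (σ i) i M).const_mul _
  refine (hLeibniz.congr_fderiv ?_).congr_of_eventuallyEq (.of_forall det_apply')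
  ext H
  simp only [_root_.sum_apply, _root_.smul_apply, entryCLM_apply, smul_eq_mul, traceMulCLM_apply,
    ← sum_det_updateCol_eq_trace_adjugate_mul, det_updateCol_eq_sum_perm, transpose_apply, mul_sum]
  rw [sum_comm]
  exact sum_congr rfl fun i _ => sum_congr rfl fun σ _ => by ring

end Determinant

end Matrix

section Deviator

open Matrix

theorem trace_dev (A : Matrix (Fin 3) (Fin 3) ℝ) : (dev A).trace = 0 := by
  simp [dev, trace_fin_three]

theorem dev_dev (A : Matrix (Fin 3) (Fin 3) ℝ) : dev (dev A) = dev A := by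
  rw [dev, trace_dev, zero_div, zero_smul, sub_zero]

theorem dev_transpose (A : Matrix (Fin 3) (Fin 3) ℝ) : dev Aᵀ = (dev A)ᵀ := by
  simp [dev]

theorem trace_mul_dev (X H : Matrix (Fin 3) (Fin 3) ℝ) : (X * dev H).trace = (dev X * H).trace := by
  simp only [dev, Matrix.mul_sub, Matrix.sub_mul, Matrix.mul_smul, Matrix.smul_mul, Matrix.mul_one,
    Matrix.one_mul, trace_sub, trace_smul, smul_eq_mul]
  ring

noncomputable def devCLM : Matrix (Fin 3) (Fin 3) ℝ →L[ℝ] Matrix (Fin 3) (Fin 3) ℝ :=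
  LinearMap.toContinuousLinearMap
    { toFun := dev
      map_add' := fun A B => by simp only [dev, trace_add, add_div, add_smul]; abel
      map_smul' := fun c A => by
        simp only [dev, trace_smul, smul_eq_mul, mul_div_assoc, mul_smul, RingHom.id_apply,
          smul_sub] }

theorem devCLM_apply (A : Matrix (Fin 3) (Fin 3) ℝ) : devCLM A = dev A := rfl

theorem dev_sub (A B : Matrix (Fin 3) (Fin 3) ℝ) : dev (A - B) = dev A - dev B :=
  map_sub devCLM A B

theorem dev_smul (c : ℝ) (A : Matrix (Fin 3) (Fin 3) ℝ) : dev (c • A) = c • dev A :=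
  map_smul devCLM c A

theorem hasFDerivAt_J2 (A : Matrix (Fin 3) (Fin 3) ℝ) : HasFDerivAt J2 (traceMulCLM (dev A)) A := by
  have h : HasFDerivAt J2 ((1 / 2 : ℝ) • ((2 : ℝ) • traceMulCLM (dev A)).comp devCLM) A :=
    ((hasFDerivAt_trace_mul_self (dev A)).comp A devCLM.hasFDerivAt).const_mul (1 / 2 : ℝ)
  refine h.congr_fderiv (ContinuousLinearMap.ext fun H => ?_)
  simp [devCLM_apply, trace_mul_dev, dev_dev]

theorem hasFDerivAt_J3 (A : Matrix (Fin 3) (Fin 3) ℝ) :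
    HasFDerivAt J3 (traceMulCLM (dev (dev A).adjugate)) A := by
  have h : HasFDerivAt J3 ((traceMulCLM (dev A).adjugate).comp devCLM) A :=
    (hasFDerivAt_det (dev A)).comp A devCLM.hasFDerivAt
  refine h.congr_fderiv (ContinuousLinearMap.ext fun H => ?_)
  simp [devCLM_apply, trace_mul_dev]

theorem hasFDerivAt_Δ (A : Matrix (Fin 3) (Fin 3) ℝ) :
    HasFDerivAt Δ ((12 * J2 A ^ 2) • traceMulCLM (dev A)
      - (54 * J3 A) • traceMulCLM (dev (dev A).adjugate)) A := by
  have h : HasFDerivAt Δ ((4 : ℝ) • ((3 • J2 A ^ 2) • traceMulCLM (dev A))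
      - (27 : ℝ) • ((2 • J3 A ^ 1) • traceMulCLM (dev (dev A).adjugate))) A :=
    (((hasFDerivAt_J2 A).pow 3).const_mul 4).sub (((hasFDerivAt_J3 A).pow 2).const_mul 27)
  refine h.congr_fderiv (ContinuousLinearMap.ext fun H => ?_)
  simp only [nsmul_eq_mul, Nat.cast_ofNat, pow_one, _root_.sub_apply, _root_.smul_apply,
    traceMulCLM_apply, smul_eq_mul]
  ring

end Deviator

/-- The discriminant `Δ` is Fréchet differentiable at every `A`, with derivative
`H ↦ ⟨dev(12·J2(A)²·Aᵀ − 54·J3(A)·cof(dev(A))), H⟩_F`. -/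
theorem disc_hasFDerivAt (A : Matrix (Fin 3) (Fin 3) ℝ) :
    DifferentiableAt ℝ Δ A ∧
      ∀ H : Matrix (Fin 3) (Fin 3) ℝ,
        fderiv ℝ Δ A H =
          frobInner (dev ((12 * J2 A ^ 2) • A.transpose - (54 * J3 A) • cof (dev A))) H := by
  refine ⟨(hasFDerivAt_Δ A).differentiableAt, fun H => ?_⟩
  rw [(hasFDerivAt_Δ A).fderiv]
  simp only [dev_sub, dev_smul, frobInner, cof, Matrix.transpose_sub, Matrix.transpose_smul,
    ← dev_transpose, Matrix.transpose_transpose, Matrix.sub_mul, Matrix.smul_mul, Matrix.trace_sub,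
    Matrix.trace_smul, _root_.sub_apply, _root_.smul_apply, Matrix.traceMulCLM_apply, smul_eq_mul]
end

section
/- For every real 3×3 matrix A, let B be the 3×3 matrix with entries B i j = tr(A^{i+j}) for i, j ∈ {0, 1, 2} (so B00 = tr(A⁰) = 3, B01 = B10 = tr(A), B02 = B11 = B20 = tr(A²), B12 = B21 = tr(A³), B22 = tr(A⁴)). Then det(B) = 4·J2(A)³ − 27·J3(A)². -/
/-!
The Hankel matrix `(tr A^(i+j))` is `V Vᵀ` for the Vandermonde matrix `V` of the eigenvalues, so its
determinant is the discriminant of the characteristic polynomial. Without eigenvalues: replacing `A`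
by `A + c • 1` changes the Hankel matrix into `L H Lᵀ` with `L` unitriangular (binomial expansion of
`(A + c)^k`), so the determinant does not change and we may pass to the traceless `dev A`. For a
traceless `3 × 3` matrix `M`, Cayley–Hamilton reads `M³ = (tr M² / 2) M + det M`, which gives
`tr M³ = 3 det M` and `tr M⁴ = (tr M²)² / 2`, and the determinant is then a direct computation.
-/

namespace Matrix

variable {n R : Type*} [Fintype n] [DecidableEq n] [CommRing R]

def traceHankel (k : ℕ) (A : Matrix n n R) : Matrix (Fin k) (Fin k) R :=
  of fun i j => trace (A ^ ((i : ℕ) + j))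

theorem trace_add_smul_one_pow (A : Matrix n n R) (c : R) (k : ℕ) :
    trace ((A + c • 1) ^ k) =
      ∑ m ∈ Finset.range (k + 1), k.choose m * c ^ (k - m) * trace (A ^ m) := by
  rw [((Commute.one_right A).smul_right c).add_pow, trace_sum]
  refine Finset.sum_congr rfl fun m _ => ?_
  rw [smul_pow, one_pow, mul_smul_one, ← Nat.cast_comm, ← nsmul_eq_mul, trace_smul, trace_smul,
    nsmul_eq_mul, smul_eq_mul, mul_assoc]

theorem det_traceHankel_add_smul_one (A : Matrix n n R) (c : R) :
    (traceHankel 3 (A + c • 1)).det = (traceHankel 3 A).det := by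
  simp only [det_fin_three, traceHankel, of_apply, Fin.isValue, Fin.val_zero, Fin.val_one,
    Fin.val_two, Nat.reduceAdd, trace_add_smul_one_pow, Finset.sum_range_succ,
    Finset.sum_range_zero, Nat.choose, Nat.reduceSub]
  ring

theorem cayley_hamilton_fin_three (A : Matrix (Fin 3) (Fin 3) R) :
    (2 : R) • A ^ 3 =
      (2 * trace A) • A ^ 2 + (trace (A ^ 2) - trace A ^ 2) • A + (2 * A.det) • 1 := by
  ext i j
  fin_cases i <;> fin_cases j <;>
    simp only [pow_succ, pow_zero, one_mul, mul_apply, Fin.sum_univ_three, det_fin_three,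
      trace_fin_three, add_apply, smul_apply, smul_eq_mul, one_apply, Fin.zero_eta, Fin.mk_one,
      Fin.reduceFinMk, Fin.isValue, Fin.reduceEq, reduceIte] <;> ring

theorem det_traceHankel_of_trace_eq_zero {K : Type*} [Field K] [CharZero K]
    (M : Matrix (Fin 3) (Fin 3) K) (hM : trace M = 0) :
    (traceHankel 3 M).det = 4 * (trace (M ^ 2) / 2) ^ 3 - 27 * M.det ^ 2 := by
  have hCH : (2 : K) • M ^ 3 = trace (M ^ 2) • M + (2 * M.det) • 1 := by
    simpa [hM] using cayley_hamilton_fin_three M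
  have htr_pow_three : trace (M ^ 3) = 3 * M.det := by
    have := congrArg trace hCH
    simp only [trace_add, trace_smul, trace_one, hM, smul_eq_mul, Fintype.card_fin] at this
    linear_combination this / 2
  have htr_pow_four : trace (M ^ 4) = trace (M ^ 2) ^ 2 / 2 := by
    have := congrArg (fun X => trace (X * M)) hCH
    simp only [add_mul, smul_mul_assoc, one_mul, ← pow_succ, ← sq, trace_add, trace_smul, hM,
      smul_eq_mul] at this
    linear_combination this / 2
  rw [det_fin_three (traceHankel 3 M)]
  simp only [traceHankel, of_apply, Fin.isValue, Fin.val_zero, Fin.val_one, Fin.val_two,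
    Nat.reduceAdd, pow_zero, pow_one, trace_one, Fintype.card_fin, hM, htr_pow_three,
    htr_pow_four]
  ring

end Matrix

open Matrix

/-- Parlett's determinantal expression of the discriminant: with
`B i j = tr(A^(i+j))` for `i, j ∈ {0, 1, 2}`, `det B = 4·J2(A)³ − 27·J3(A)²`. -/
theorem disc_eq_det_trace_power_matrix (A : Matrix (Fin 3) (Fin 3) ℝ)
    (B : Matrix (Fin 3) (Fin 3) ℝ)
    (hB : ∀ i j : Fin 3, B i j = Matrix.trace (A ^ ((i : ℕ) + (j : ℕ)))) :
    B.det = 4 * J2 A ^ 3 - 27 * J3 A ^ 2 := by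
  have hB_hankel : B = traceHankel 3 A := ext hB
  have hdev : dev A = A + (-(trace A / 3)) • 1 := by rw [dev, neg_smul, sub_eq_add_neg]
  have htr : trace (dev A) = 0 := by simp [dev, trace_sub, trace_smul, trace_one]
  rw [hB_hankel, ← det_traceHankel_add_smul_one A (-(trace A / 3)), ← hdev,
    det_traceHankel_of_trace_eq_zero _ htr, J2, J3, sq (dev A)]
  ring
end
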